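/- arXiv:math/0503698 — 2 statements merged into one kernel-verified Lean document; each statement's English description precedes it below -/
import Mathlib

section
/- (Minimum Signatures Lemma) Let σ be a sequence of pebbling moves of minimum length among all sequences starting from p that place at least k pebbles on a vertex r, where p(r) ≤ k, and let D be its signature. Then D is acyclic, every sink of D with positive indegree equals r, the outdegree of r in D is 0, and the indegree of r in D is exactly k - p(r). -/
variable {V : Type*} [DecidableEq V]

/-- Result of a pebbling move `u → v`: remove two pebbles from `u`, add one to `v`. -/
def applyMove (p : V → ℕ) (u v : V) (x : V) : ℕ :=
  (if x = u then p x - 2 else p x) + (if x = v then 1 else 0)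

/-- A list of moves is a valid sequence of pebbling moves from `p` in `G`. -/
def IsValidSeq (G : SimpleGraph V) : (V → ℕ) → List (V × V) → Prop
  | _, [] => True
  | p, m :: rest => G.Adj m.1 m.2 ∧ 2 ≤ p m.1 ∧ IsValidSeq G (applyMove p m.1 m.2) rest

/-- The distribution after executing a sequence of pebbling moves. -/
def applySeq (p : V → ℕ) : List (V × V) → V → ℕ
  | [] => p
  | m :: rest => applySeq (applyMove p m.1 m.2) rest

/-- Indegree of a vertex in a directed multigraph (multiset of directed edges). -/
def indeg (D : Multiset (V × V)) (v : V) : ℕ :=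
  Multiset.card (D.filter fun e => e.2 = v)

/-- Outdegree of a vertex in a directed multigraph. -/
def outdeg (D : Multiset (V × V)) (v : V) : ℕ :=
  Multiset.card (D.filter fun e => e.1 = v)

/-- balance(D,p,v) = p(v) + indeg_D(v) - 2·outdeg_D(v). -/
def balance (D : Multiset (V × V)) (p : V → ℕ) (v : V) : ℤ :=
  (p v : ℤ) + (indeg D v : ℤ) - 2 * (outdeg D v : ℤ)

/-- `D` is orderable under `p`: some ordering of the edge multiset of `D`
is a valid sequence of pebbling moves. -/
def Orderable (G : SimpleGraph V) (D : Multiset (V × V)) (p : V → ℕ) : Prop :=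
  ∃ σ : List (V × V), (σ : Multiset (V × V)) = D ∧ IsValidSeq G p σ

/-- A directed multigraph is acyclic if its edge relation admits no directed cycle. -/
def DAcyclic (D : Multiset (V × V)) : Prop :=
  ∀ v : V, ¬ Relation.TransGen (fun a b => (a, b) ∈ D) v v

/-- The strongly connected component of `a` in the directed multigraph `D`. -/
def SCC (D : Multiset (V × V)) (a : V) : Set V :=
  {b | Relation.ReflTransGen (fun x y => (x, y) ∈ D) a b ∧
       Relation.ReflTransGen (fun x y => (x, y) ∈ D) b a}


/-!
The balance `p v + indeg D v - 2 * outdeg D v` of a signature `D` is the number of pebbles an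
ordering of `D` leaves on `v`; conversely, an acyclic multigraph with nonnegative balances can be
ordered by repeatedly firing a source. Deleting a directed cycle never lowers a balance, so the
signature of a minimum sequence contains an orderable acyclic sub-signature that still puts `k`
pebbles on `r`, and minimality forces it to be the whole signature. Deleting a single edge into a
vertex `v` of positive balance likewise yields a shorter sequence unless `v = r` and `r` ends with
at most `k` pebbles; this shows that every proper sink is `r` and pins down the indegree of `r`.
A path leaving `r` would end at a proper sink, hence at `r`, and close a cycle.
-/

open Relation

namespace Relation

variable {α : Type*} {R : α → α → Prop}

lemma exists_transGen_forall_not_rel (hR : ∀ a, ¬ TransGen R a a) {x y : α} (hxy : R x y)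
    (hfin : {z | ∃ w, R w z}.Finite) : ∃ z, TransGen R x z ∧ ∀ w, ¬ R z w := by
  have : IsStrictOrder α (Function.swap (TransGen R)) :=
    { irrefl := hR, trans := fun _ _ _ hab hbc => hbc.trans hab }
  obtain ⟨z, hz, hmax⟩ :=
    (Set.wellFoundedOn_iff.1 (hfin.wellFoundedOn (r := Function.swap (TransGen R)))).has_min
      {z | TransGen R x z} ⟨y, TransGen.single hxy⟩
  obtain ⟨u, -, huz⟩ := TransGen.tail'_iff.1 hz
  exact ⟨z, hz, fun w hzw =>
    hmax w (hz.tail hzw) ⟨TransGen.single hzw, ⟨z, hzw⟩, ⟨u, huz⟩⟩⟩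

lemma exists_isChain_of_transGen {a b : α} (h : TransGen R a b) :
    ∃ l, (a :: l ++ [b]).IsChain R := by
  induction h with
  | single hab => exact ⟨[], by simpa using hab⟩
  | @tail b c _ hbc ih =>
    obtain ⟨l, hl⟩ := ih
    refine ⟨l ++ [b], ?_⟩
    simpa [List.isChain_append, hbc] using hl

lemma exists_nodup_cycle_of_transGen {a : α} (h : TransGen R a a) :
    ∃ b l, (b :: l).Nodup ∧ (b :: l ++ [b]).IsChain R := by
  classical
  have hex : ∃ n, ∃ b l, l.length = n ∧ (b :: l ++ [b]).IsChain R := by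
    obtain ⟨l, hl⟩ := exists_isChain_of_transGen h
    exact ⟨_, a, l, rfl, hl⟩
  obtain ⟨b, l, hlen, hl⟩ := Nat.find_spec hex
  refine ⟨b, l, List.nodup_iff_sublist.2 fun x hx => ?_, hl⟩
  obtain ⟨r₁, r₂, hsplit, hx₁, hx₂⟩ := List.cons_sublist_iff.1 hx
  obtain ⟨s₁, s₂, rfl⟩ := List.append_of_mem hx₁
  obtain ⟨t₁, t₂, rfl⟩ := List.append_of_mem (hx₂.subset (List.mem_singleton_self x))
  -- the walk between the two visits of `x` is a shorter closed walk
  have hshort : (x :: (s₂ ++ t₁) ++ [x]).IsChain R :=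
    hl.infix ⟨s₁, t₂ ++ [b], by rw [hsplit]; simp⟩
  have hlt : (s₂ ++ t₁).length < Nat.find hex := by
    have := congrArg List.length hsplit
    simp only [List.length_cons, List.length_append] at this ⊢
    omega
  exact Nat.find_min hex hlt ⟨x, _, rfl, hshort⟩

end Relation

lemma indeg_coe (l : List (V × V)) (v : V) :
    indeg (l : Multiset (V × V)) v = (l.map Prod.snd).count v := by
  simp [indeg, List.count, List.countP_eq_length_filter, List.filter_map, Function.comp_def,
    beq_eq_decide]

lemma outdeg_coe (l : List (V × V)) (v : V) :
    outdeg (l : Multiset (V × V)) v = (l.map Prod.fst).count v := by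
  simp [outdeg, List.count, List.countP_eq_length_filter, List.filter_map, Function.comp_def,
    beq_eq_decide]

lemma indeg_pos_iff {D : Multiset (V × V)} {v : V} : 0 < indeg D v ↔ ∃ u, (u, v) ∈ D := by
  simp [indeg, Multiset.card_pos_iff_exists_mem]

lemma outdeg_pos_iff {D : Multiset (V × V)} {v : V} : 0 < outdeg D v ↔ ∃ w, (v, w) ∈ D := by
  simp [outdeg, Multiset.card_pos_iff_exists_mem]

lemma indeg_cons (e : V × V) (D : Multiset (V × V)) (v : V) :
    indeg (e ::ₘ D) v = indeg D v + if v = e.2 then 1 else 0 := by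
  by_cases h : v = e.2 <;> simp [indeg, h, eq_comm]

lemma outdeg_cons (e : V × V) (D : Multiset (V × V)) (v : V) :
    outdeg (e ::ₘ D) v = outdeg D v + if v = e.1 then 1 else 0 := by
  by_cases h : v = e.1 <;> simp [outdeg, h, eq_comm]

lemma indeg_sub {C D : Multiset (V × V)} (h : C ≤ D) (v : V) :
    indeg (D - C) v = indeg D v - indeg C v := by
  rw [indeg, indeg, indeg, Multiset.filter_sub,
    Multiset.card_sub (Multiset.filter_le_filter _ h)]

lemma outdeg_sub {C D : Multiset (V × V)} (h : C ≤ D) (v : V) :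
    outdeg (D - C) v = outdeg D v - outdeg C v := by
  rw [outdeg, outdeg, outdeg, Multiset.filter_sub,
    Multiset.card_sub (Multiset.filter_le_filter _ h)]

lemma balance_cons (e : V × V) (D : Multiset (V × V)) (p : V → ℕ) (v : V) :
    balance (e ::ₘ D) p v =
      balance D p v + (if v = e.2 then 1 else 0) - 2 * (if v = e.1 then 1 else 0) := by
  simp only [balance, indeg_cons, outdeg_cons]
  split_ifs <;> push_cast <;> ring

lemma balance_erase {D : Multiset (V × V)} {e : V × V} (he : e ∈ D) (p : V → ℕ) (v : V) :
    balance (D.erase e) p v =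
      balance D p v - (if v = e.2 then 1 else 0) + 2 * (if v = e.1 then 1 else 0) := by
  have h := balance_cons e (D.erase e) p v
  rw [Multiset.cons_erase he] at h
  linarith

lemma balance_sub {C D : Multiset (V × V)} (h : C ≤ D) (p : V → ℕ) (v : V) :
    balance (D - C) p v = balance D p v - indeg C v + 2 * outdeg C v := by
  have hin : indeg C v ≤ indeg D v := Multiset.card_le_card (Multiset.filter_le_filter _ h)
  have hout : outdeg C v ≤ outdeg D v := Multiset.card_le_card (Multiset.filter_le_filter _ h)
  simp only [balance, indeg_sub h, outdeg_sub h]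
  push_cast [hin, hout]
  ring

lemma balance_applyMove {p : V → ℕ} {e : V × V} (hp : 2 ≤ p e.1) (D : Multiset (V × V))
    (v : V) :
    balance D (applyMove p e.1 e.2) v = balance (e ::ₘ D) p v := by
  rw [balance_cons, balance, balance, applyMove]
  split_ifs <;> subst_vars <;> push_cast [hp] <;> ring

namespace IsValidSeq

variable {G : SimpleGraph V} {p : V → ℕ} {σ : List (V × V)}

lemma adj_of_mem (hσ : IsValidSeq G p σ) {e : V × V} (he : e ∈ σ) : G.Adj e.1 e.2 := by
  induction σ generalizing p with
  | nil => simp at he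
  | cons m σ ih =>
    obtain rfl | he := List.mem_cons.1 he
    exacts [hσ.1, ih hσ.2.2 he]

lemma applySeq_eq_balance (hσ : IsValidSeq G p σ) (v : V) :
    (applySeq p σ v : ℤ) = balance σ p v := by
  induction σ generalizing p with
  | nil => simp [applySeq, balance, indeg, outdeg]
  | cons m σ ih => exact (ih hσ.2.2).trans (balance_applyMove hσ.2.1 σ v)

lemma balance_nonneg (hσ : IsValidSeq G p σ) (v : V) : 0 ≤ balance σ p v :=
  hσ.applySeq_eq_balance v ▸ Int.natCast_nonneg _

end IsValidSeq

lemma DAcyclic.mono {α : Type*} {C D : Multiset (α × α)} (h : C ≤ D) (hD : DAcyclic D) :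
    DAcyclic C :=
  fun v hv => hD v (TransGen.mono (fun _ _ hab => Multiset.mem_of_le h hab) v v hv)

lemma finite_setOf_exists_mem_left {α : Type*} (D : Multiset (α × α)) :
    {z | ∃ w, (z, w) ∈ D}.Finite :=
  (D.map Prod.fst).finite_toSet.subset fun z ⟨w, hw⟩ => by simpa using ⟨w, hw⟩

lemma finite_setOf_exists_mem_right {α : Type*} (D : Multiset (α × α)) :
    {z | ∃ w, (w, z) ∈ D}.Finite :=
  (D.map Prod.snd).finite_toSet.subset fun z ⟨w, hw⟩ => by simpa using ⟨w, hw⟩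

lemma DAcyclic.exists_sink {D : Multiset (V × V)} (hD : DAcyclic D) {x y : V}
    (hxy : (x, y) ∈ D) :
    ∃ z, TransGen (fun a b => (a, b) ∈ D) x z ∧ 0 < indeg D z ∧ outdeg D z = 0 := by
  obtain ⟨z, hxz, hz⟩ := exists_transGen_forall_not_rel hD hxy (finite_setOf_exists_mem_right D)
  obtain ⟨w, -, hwz⟩ := TransGen.tail'_iff.1 hxz
  refine ⟨z, hxz, indeg_pos_iff.2 ⟨w, hwz⟩, Nat.eq_zero_of_not_pos fun h => ?_⟩
  obtain ⟨u, hu⟩ := outdeg_pos_iff.1 h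
  exact hz u hu

lemma DAcyclic.exists_source {D : Multiset (V × V)} (hD : DAcyclic D) (hne : D ≠ 0) :
    ∃ e ∈ D, indeg D e.1 = 0 := by
  obtain ⟨⟨x, y⟩, hxy⟩ := Multiset.exists_mem_of_ne_zero hne
  obtain ⟨z, hzy, hz⟩ :=
    exists_transGen_forall_not_rel (R := Function.swap fun a b => (a, b) ∈ D)
    (fun a h => hD a (transGen_swap.1 h)) hxy (finite_setOf_exists_mem_left D)
  obtain ⟨w, hzw, -⟩ := TransGen.head'_iff.1 (transGen_swap.1 hzy)
  refine ⟨(z, w), hzw, Nat.eq_zero_of_not_pos fun h => ?_⟩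
  obtain ⟨u, hu⟩ := indeg_pos_iff.1 h
  exact hz u hu

lemma exists_indeg_eq_outdeg_of_not_dAcyclic {D : Multiset (V × V)} (h : ¬ DAcyclic D) :
    ∃ C ≤ D, C ≠ 0 ∧ ∀ v, indeg C v = outdeg C v := by
  obtain ⟨a, ha⟩ := not_forall_not.1 h
  obtain ⟨b, l, hnodup, hchain⟩ := exists_nodup_cycle_of_transGen ha
  have hlen : (b :: l).length = (l ++ [b]).length := by simp
  refine ⟨((b :: l).zip (l ++ [b]) : Multiset (V × V)), ?_, ?_, fun v => ?_⟩
  · have hnd : ((b :: l).zip (l ++ [b])).Nodup :=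
      List.Nodup.of_map Prod.fst (by rwa [List.map_fst_zip hlen.le])
    refine (Multiset.le_iff_subset (Multiset.coe_nodup.2 hnd)).2 fun e he => ?_
    have hrel := @(List.forall₂_iff_zip.1 (List.isChain_iff_forall₂.1 hchain)).2 e.1 e.2
    rw [List.dropLast_concat, List.cons_append, List.tail_cons] at hrel
    exact hrel (Multiset.mem_coe.1 he)
  · cases l <;> simp
  · rw [indeg_coe, outdeg_coe, List.map_snd_zip hlen.ge, List.map_fst_zip hlen.le]
    simp [List.count_cons, List.count_append]

lemma exists_dAcyclic_le_balance (D : Multiset (V × V)) (p : V → ℕ) :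
    ∃ D' ≤ D, DAcyclic D' ∧ ∀ v, balance D p v ≤ balance D' p v := by
  induction D using Multiset.strongInductionOn with
  | ih D ih =>
  by_cases hD : DAcyclic D
  · exact ⟨D, le_rfl, hD, fun _ => le_rfl⟩
  obtain ⟨C, hCD, hC0, hC⟩ := exists_indeg_eq_outdeg_of_not_dAcyclic hD
  have hlt : D - C < D := (Multiset.sub_le_self D C).lt_of_ne fun h => hC0 <| by
    have := tsub_add_cancel_of_le hCD
    rwa [h, add_eq_left] at this
  obtain ⟨D', hD', hacyc, hbal⟩ := ih (D - C) hlt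
  refine ⟨D', hD'.trans (Multiset.sub_le_self _ _), hacyc, fun v => ?_⟩
  have hsub := balance_sub hCD p v
  rw [hC] at hsub
  linarith [hbal v]

section Orderable

variable {G : SimpleGraph V}

lemma DAcyclic.orderable {D : Multiset (V × V)} {p : V → ℕ} (hD : DAcyclic D)
    (hadj : ∀ e ∈ D, G.Adj e.1 e.2) (hbal : ∀ v, 0 ≤ balance D p v) : Orderable G D p := by
  induction D using Multiset.strongInductionOn generalizing p with
  | ih D ih =>
  rcases eq_or_ne D 0 with rfl | hne
  · exact ⟨[], rfl, trivial⟩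
  obtain ⟨e, he, hsrc⟩ := hD.exists_source hne
  have hp : 2 ≤ p e.1 := by
    have h0 := hbal e.1
    have h1 : 0 < outdeg D e.1 := outdeg_pos_iff.2 ⟨e.2, he⟩
    rw [balance, hsrc] at h0
    omega
  have hcons := Multiset.cons_erase he
  obtain ⟨τ, hτ, hτvalid⟩ := ih (D.erase e) (Multiset.erase_lt.2 he)
    (hD.mono (Multiset.erase_le _ _)) (fun f hf => hadj f (Multiset.mem_of_mem_erase hf))
    (fun v => by rw [balance_applyMove hp, hcons]; exact hbal v)
  exact ⟨e :: τ, by rw [← Multiset.cons_coe, hτ, hcons], hadj e he, hp, hτvalid⟩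

lemma exists_dAcyclic_orderable_le {D : Multiset (V × V)} {p : V → ℕ}
    (hadj : ∀ e ∈ D, G.Adj e.1 e.2) (hbal : ∀ v, 0 ≤ balance D p v) :
    ∃ D' ≤ D, DAcyclic D' ∧ Orderable G D' p ∧ ∀ v, balance D p v ≤ balance D' p v := by
  obtain ⟨D', hle, hD', hbal'⟩ := exists_dAcyclic_le_balance D p
  exact ⟨D', hle, hD', hD'.orderable (fun e he => hadj e (Multiset.mem_of_le hle he))
    (fun v => (hbal v).trans (hbal' v)), hbal'⟩

end Orderable

section Minimal

variable {G : SimpleGraph V} {p : V → ℕ} {r : V} {k : ℕ} {σ : List (V × V)}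

lemma exists_dAcyclic_le_length_le_card
    (hmin : ∀ τ : List (V × V), IsValidSeq G p τ → k ≤ applySeq p τ r →
      σ.length ≤ τ.length)
    {D : Multiset (V × V)} (hadj : ∀ e ∈ D, G.Adj e.1 e.2) (hbal : ∀ v, 0 ≤ balance D p v)
    (hr : k ≤ balance D p r) : ∃ D' ≤ D, DAcyclic D' ∧ σ.length ≤ Multiset.card D' := by
  obtain ⟨_, hle, hD', ⟨τ, rfl, hτ⟩, hbal'⟩ := exists_dAcyclic_orderable_le hadj hbal
  refine ⟨τ, hle, hD', hmin τ hτ ?_⟩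
  have := hr.trans (hbal' r)
  rw [← hτ.applySeq_eq_balance] at this
  exact_mod_cast this

lemma dAcyclic_of_minimal
    (hmin : ∀ τ : List (V × V), IsValidSeq G p τ → k ≤ applySeq p τ r →
      σ.length ≤ τ.length)
    (hσ : IsValidSeq G p σ) (hr : k ≤ balance σ p r) : DAcyclic (σ : Multiset (V × V)) := by
  obtain ⟨D', hle, hD', hlen⟩ := exists_dAcyclic_le_length_le_card hmin
    (fun _ he => hσ.adj_of_mem he) hσ.balance_nonneg hr
  rwa [← Multiset.eq_of_le_of_card_le hle (by simpa using hlen)]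

lemma eq_and_balance_le_of_minimal
    (hmin : ∀ τ : List (V × V), IsValidSeq G p τ → k ≤ applySeq p τ r →
      σ.length ≤ τ.length)
    (hσ : IsValidSeq G p σ) (hr : k ≤ balance σ p r) {u v : V} (he : (u, v) ∈ σ)
    (hv : 1 ≤ balance σ p v) : v = r ∧ balance σ p r ≤ k := by
  by_contra! hcon
  have he' : (u, v) ∈ (σ : Multiset (V × V)) := he
  have hbal' (x : V) : 0 ≤ balance ((σ : Multiset (V × V)).erase (u, v)) p x := by
    have := hσ.balance_nonneg x
    rw [balance_erase he']
    dsimp only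
    split_ifs <;> subst_vars <;> omega
  have hr' : k ≤ balance ((σ : Multiset (V × V)).erase (u, v)) p r := by
    rw [balance_erase he']
    dsimp only
    by_cases hvr : v = r
    · have := hcon hvr
      split_ifs <;> omega
    · rw [if_neg (Ne.symm hvr)]
      split_ifs <;> omega
  obtain ⟨D', hle, -, hlen⟩ := exists_dAcyclic_le_length_le_card hmin
    (fun _ hf => hσ.adj_of_mem (Multiset.mem_of_mem_erase hf)) hbal' hr'
  have hcard := Multiset.card_le_card hle
  rw [Multiset.card_erase_of_mem he', Multiset.coe_card, Nat.pred_eq_sub_one] at hcard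
  have := List.length_pos_of_mem he
  omega

end Minimal

/-- Minimum Signatures Lemma. -/
theorem minimum_signatures (G : SimpleGraph V) (p : V → ℕ) (r : V) (k : ℕ)
    (hpr : p r ≤ k) (σ : List (V × V)) (hσ : IsValidSeq G p σ)
    (hk : k ≤ applySeq p σ r)
    (hmin : ∀ τ : List (V × V), IsValidSeq G p τ → k ≤ applySeq p τ r →
      σ.length ≤ τ.length) :
    DAcyclic (σ : Multiset (V × V)) ∧
    (∀ v : V, 1 ≤ indeg (σ : Multiset (V × V)) v →
      outdeg (σ : Multiset (V × V)) v = 0 → v = r) ∧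
    outdeg (σ : Multiset (V × V)) r = 0 ∧
    indeg (σ : Multiset (V × V)) r = k - p r := by
  have hr : k ≤ balance σ p r := by
    rw [← hσ.applySeq_eq_balance]
    exact_mod_cast hk
  have hacyc := dAcyclic_of_minimal hmin hσ hr
  have hsink (v : V) (hin : 1 ≤ indeg (σ : Multiset (V × V)) v)
      (hout : outdeg (σ : Multiset (V × V)) v = 0) : v = r := by
    obtain ⟨u, huv⟩ := indeg_pos_iff.1 hin
    refine (eq_and_balance_le_of_minimal hmin hσ hr huv ?_).1
    rw [balance, hout]
    omega
  have hout : outdeg (σ : Multiset (V × V)) r = 0 := by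
    by_contra h
    obtain ⟨w, hw⟩ := outdeg_pos_iff.1 (Nat.pos_of_ne_zero h)
    obtain ⟨z, hrz, hin, hout⟩ := hacyc.exists_sink hw
    exact hacyc r (hsink z hin hout ▸ hrz)
  refine ⟨hacyc, hsink, hout, ?_⟩
  have hbal_r : balance σ p r = p r + indeg (σ : Multiset (V × V)) r := by
    simp [balance, hout]
  rcases Nat.eq_zero_or_pos (indeg (σ : Multiset (V × V)) r) with h0 | hpos
  · omega
  · obtain ⟨u, hu⟩ := indeg_pos_iff.1 hpos
    have := (eq_and_balance_le_of_minimal hmin hσ hr hu (by omega)).2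
    omega
end

section
/- Let G be a graph with pebble distribution p and target vertex r, and define q by q(v) = p(v) + 1 for all v ≠ r and q(r) = p(r). Then r is reachable in G under p if and only if from q there is a sequence of pebbling moves after which every vertex of G has at least one pebble. -/
variable {V : Type*} [DecidableEq V]

/-! The final distribution of a valid sequence of moves depends only on the multiset `D` of its
moves: it is the balance `p v + indeg D v - 2 * outdeg D v`. Conversely, any multiset of edges with
nonnegative balance is realised by a valid sequence ending with at least that many pebbles
everywhere. So a distribution `t` is dominated by one reachable from `p` iff `t ≤ balance D p` for
some `D`, and passing from `p` to `q` raises every balance by exactly the extra pebble. -/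

open Function

lemma applyMove_cast {p : V → ℕ} {u : V} (h : 2 ≤ p u) (v x : V) :
    (applyMove p u v x : ℤ) = p x + (if x = v then 1 else 0) - 2 * (if x = u then 1 else 0) := by
  unfold applyMove
  split_ifs <;> subst_vars <;> omega

lemma indeg_add (C D : Multiset (V × V)) (w : V) : indeg (C + D) w = indeg C w + indeg D w := by
  simp only [indeg, Multiset.filter_add, Multiset.card_add]

lemma outdeg_add (C D : Multiset (V × V)) (w : V) :
    outdeg (C + D) w = outdeg C w + outdeg D w := by
  simp only [outdeg, Multiset.filter_add, Multiset.card_add]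

lemma balance_zero (p : V → ℕ) (w : V) : balance (0 : Multiset (V × V)) p w = p w := by
  simp [balance, indeg, outdeg]

lemma balance_add (C D : Multiset (V × V)) (p : V → ℕ) (w : V) :
    balance (C + D) p w = balance D p w + indeg C w - 2 * outdeg C w := by
  simp only [balance, indeg_add, outdeg_add]
  push_cast
  ring

lemma balance_add_distribution (D : Multiset (V × V)) (p c : V → ℕ) (w : V) :
    balance D (p + c) w = balance D p w + c w := by
  simp only [balance, Pi.add_apply]
  push_cast
  ring

lemma balance_cons_s17 {p : V → ℕ} {m : V × V} (h : 2 ≤ p m.1) (D : Multiset (V × V)) (w : V) :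
    balance (m ::ₘ D) p w = balance D (applyMove p m.1 m.2) w := by
  rw [← Multiset.singleton_add, balance_add, balance, balance, applyMove_cast h]
  simp only [indeg, outdeg, Multiset.filter_singleton]
  rcases eq_or_ne m.1 w with h1 | h1 <;> rcases eq_or_ne m.2 w with h2 | h2 <;>
    simp [h1, h2, eq_comm (a := w)] <;> ring

lemma IsValidSeq.applySeq_eq_balance_s17 {G : SimpleGraph V} {p : V → ℕ} {σ : List (V × V)}
    (hσ : IsValidSeq G p σ) (w : V) : (applySeq p σ w : ℤ) = balance σ p w := by
  induction σ generalizing p with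
  | nil => simp [applySeq, balance_zero]
  | cons m σ ih =>
    rw [← Multiset.cons_coe, balance_cons_s17 hσ.2.1]
    exact ih hσ.2.2

lemma IsValidSeq.adj_of_mem_s17 {G : SimpleGraph V} {p : V → ℕ} {σ : List (V × V)}
    (hσ : IsValidSeq G p σ) {e : V × V} (he : e ∈ σ) : G.Adj e.1 e.2 := by
  induction σ generalizing p with
  | nil => simp at he
  | cons m σ ih =>
    rcases List.mem_cons.1 he with rfl | he
    · exact hσ.1
    · exact ih hσ.2.2 he

lemma Finset.exists_minimalPeriod_pos_of_mapsTo {α : Type*} {s : Finset α} (hs : s.Nonempty)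
    {f : α → α} (hf : Set.MapsTo f s s) : ∃ x ∈ s, 0 < minimalPeriod f x := by
  obtain ⟨x₀, hx₀⟩ := hs
  obtain ⟨i, j, hij, hfij⟩ := s.finite_toSet.exists_lt_map_eq_of_forall_mem
    (f := fun n : ℕ => f^[n] x₀) fun n => hf.iterate n hx₀
  refine ⟨f^[i] x₀, hf.iterate i hx₀, IsPeriodicPt.minimalPeriod_pos (n := j - i) (by omega) ?_⟩
  change f^[j - i] (f^[i] x₀) = f^[i] x₀
  rw [← iterate_add_apply, Nat.sub_add_cancel hij.le]
  exact hfij.symm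

lemma Finset.sum_range_succ_eq_sum_range_of_eq {M : Type*} [AddCancelCommMonoid M] {f : ℕ → M}
    {n : ℕ} (h : f n = f 0) : ∑ k ∈ range n, f (k + 1) = ∑ k ∈ range n, f k :=
  add_right_cancel (b := f 0) (by rw [← Finset.sum_range_succ', Finset.sum_range_succ, h])

lemma Multiset.card_filter_range (P : ℕ → Prop) [DecidablePred P] (n : ℕ) :
    card ((range n).filter P) = ∑ k ∈ Finset.range n, if P k then 1 else 0 := by
  rw [← Finset.card_filter]
  rfl

/-- Following a chosen incoming edge backwards from every tail of `D` must eventually cycle; the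
periodic orbit of this predecessor map is a directed cycle in `D`. -/
lemma exists_circulation_le {D : Multiset (V × V)} (hD : D ≠ 0)
    (hsrc : ∀ u, 0 < outdeg D u → 0 < indeg D u) :
    ∃ C ≤ D, C ≠ 0 ∧ ∀ w, indeg C w = outdeg C w := by
  set S := (D.map Prod.fst).toFinset
  have hmemS : ∀ {e}, e ∈ D → e.1 ∈ S := fun he =>
    Multiset.mem_toFinset.2 (Multiset.mem_map_of_mem _ he)
  have hpred : ∀ a ∈ S, ∃ b, (b, a) ∈ D := by
    intro a ha
    obtain ⟨e, he, rfl⟩ := Multiset.mem_map.1 (Multiset.mem_toFinset.1 ha)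
    have hout : 0 < outdeg D e.1 :=
      Multiset.card_pos_iff_exists_mem.2 ⟨e, Multiset.mem_filter.2 ⟨he, rfl⟩⟩
    obtain ⟨f, hf⟩ := Multiset.card_pos_iff_exists_mem.1 (hsrc _ hout)
    obtain ⟨hfD, hf2⟩ := Multiset.mem_filter.1 hf
    exact ⟨f.1, hf2 ▸ hfD⟩
  choose! g hg using hpred
  have hmaps : Set.MapsTo g S S := fun a ha => hmemS (hg a ha)
  obtain ⟨e, he⟩ := Multiset.exists_mem_of_ne_zero hD
  obtain ⟨x, hxS, hx⟩ := Finset.exists_minimalPeriod_pos_of_mapsTo ⟨_, hmemS he⟩ hmaps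
  set n := minimalPeriod g x
  refine ⟨(Multiset.range n).map fun k => (g^[k + 1] x, g^[k] x), ?_, ?_, fun w => ?_⟩
  · refine (Multiset.le_iff_subset ((Multiset.nodup_range n).map_on ?_)).2 ?_
    · intro i hi j hj hij
      exact iterate_injOn_Iio_minimalPeriod (Multiset.mem_range.1 hi) (Multiset.mem_range.1 hj)
        (Prod.ext_iff.1 hij).2
    · intro c hc
      obtain ⟨k, -, rfl⟩ := Multiset.mem_map.1 hc
      rw [iterate_succ_apply']
      exact hg _ (hmaps.iterate k hxS)
  · rw [Ne, Multiset.map_eq_zero, ← Multiset.card_eq_zero, Multiset.card_range]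
    exact hx.ne'
  · simp only [indeg, outdeg, Multiset.filter_map, Multiset.card_map, comp_def]
    rw [Multiset.card_filter_range, Multiset.card_filter_range]
    exact (Finset.sum_range_succ_eq_sum_range_of_eq
      (by rw [iterate_minimalPeriod, iterate_zero_apply])).symm

lemma balance_le_balance_sub {C D : Multiset (V × V)} (hCD : C ≤ D)
    (hC : ∀ w, indeg C w = outdeg C w) (p : V → ℕ) (w : V) :
    balance D p w ≤ balance (D - C) p w := by
  conv_lhs => rw [← add_tsub_cancel_of_le hCD]
  rw [balance_add, hC w]
  omega

/-- A vertex with outgoing but no incoming moves has at least two pebbles, so one of its moves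
can be made first. If there is no such vertex, `D` contains a directed cycle, and deleting it only
raises balances. -/
lemma exists_validSeq_of_balance_nonneg (G : SimpleGraph V) (D : Multiset (V × V))
    (hG : ∀ e ∈ D, G.Adj e.1 e.2) (p : V → ℕ) (hbal : ∀ v, 0 ≤ balance D p v) :
    ∃ σ, IsValidSeq G p σ ∧ ∀ v, balance D p v ≤ applySeq p σ v := by
  induction D using Multiset.strongInductionOn generalizing p with
  | ih D ih =>
  by_cases hD : D = 0
  · subst hD
    exact ⟨[], trivial, fun v => (balance_zero p v).le⟩
  by_cases hsrc : ∃ u, 0 < outdeg D u ∧ indeg D u = 0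
  · obtain ⟨u, hout, hin⟩ := hsrc
    obtain ⟨e, he⟩ := Multiset.card_pos_iff_exists_mem.1 hout
    obtain ⟨heD, rfl⟩ := Multiset.mem_filter.1 he
    have h2 : 2 ≤ p e.1 := by
      have := hbal e.1
      simp only [balance, hin] at this
      change 1 ≤ outdeg D e.1 at hout
      omega
    have hbal' : ∀ v, balance (D.erase e) (applyMove p e.1 e.2) v = balance D p v := fun v => by
      rw [← balance_cons_s17 h2, Multiset.cons_erase heD]
    obtain ⟨σ, hσ, hσbal⟩ := ih _ (Multiset.erase_lt.2 heD)
      (fun f hf => hG f (Multiset.mem_of_mem_erase hf)) _ fun v => hbal' v ▸ hbal v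
    exact ⟨e :: σ, ⟨hG e heD, h2, hσ⟩, fun v => hbal' v ▸ hσbal v⟩
  · simp only [not_exists, not_and] at hsrc
    obtain ⟨C, hCD, hC0, hC⟩ := exists_circulation_le hD fun u hu => Nat.pos_of_ne_zero (hsrc u hu)
    have hlt : D - C < D := tsub_le_self.lt_of_ne fun h => hC0 <| by
      simpa [h] using add_tsub_cancel_of_le hCD
    have hmono := balance_le_balance_sub hCD hC p
    obtain ⟨σ, hσ, hσbal⟩ := ih (D - C) hlt
      (fun f hf => hG f (Multiset.mem_of_le tsub_le_self hf)) p fun v => (hbal v).trans (hmono v)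
    exact ⟨σ, hσ, fun v => (hmono v).trans (hσbal v)⟩

lemma exists_validSeq_le_applySeq_iff (G : SimpleGraph V) (p t : V → ℕ) :
    (∃ σ, IsValidSeq G p σ ∧ ∀ v, t v ≤ applySeq p σ v) ↔
      ∃ D : Multiset (V × V), (∀ e ∈ D, G.Adj e.1 e.2) ∧ ∀ v, (t v : ℤ) ≤ balance D p v := by
  constructor
  · rintro ⟨σ, hσ, ht⟩
    exact ⟨σ, fun e he => hσ.adj_of_mem_s17 he,
      fun v => hσ.applySeq_eq_balance_s17 v ▸ by exact_mod_cast ht v⟩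
  · rintro ⟨D, hG, ht⟩
    obtain ⟨σ, hσ, hσbal⟩ :=
      exists_validSeq_of_balance_nonneg G D hG p fun v => (ht v).trans' (by positivity)
    exact ⟨σ, hσ, fun v => by exact_mod_cast (ht v).trans (hσbal v)⟩

/-- `r` is reachable under `p` iff the distribution `q` obtained by adding one pebble to
every vertex except `r` covers the unit distribution. -/
theorem reachable_iff_coverable (G : SimpleGraph V) (p : V → ℕ) (r : V) :
    (∃ σ : List (V × V), IsValidSeq G p σ ∧ 1 ≤ applySeq p σ r) ↔
    (∃ τ : List (V × V),
      IsValidSeq G (fun x => if x = r then p r else p x + 1) τ ∧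
      ∀ x : V, 1 ≤ applySeq (fun x => if x = r then p r else p x + 1) τ x) := by
  set c : V → ℕ := fun x => if x = r then 0 else 1
  have hq : (fun x => if x = r then p r else p x + 1) = p + c := by
    ext x; by_cases hx : x = r <;> simp [c, hx]
  have hr : ∀ σ, 1 ≤ applySeq p σ r ↔ ∀ x, (if x = r then 1 else 0) ≤ applySeq p σ x := fun σ =>
    ⟨fun h x => by split_ifs with hx <;> simp_all, fun h => by simpa using h r⟩
  simp only [hr, hq, exists_validSeq_le_applySeq_iff (t := fun _ => 1)]
  rw [exists_validSeq_le_applySeq_iff]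
  refine exists_congr fun D => and_congr_right fun _ => forall_congr' fun x => ?_
  rw [balance_add_distribution]
  by_cases hx : x = r <;> simp [c, hx]
end
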